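/- arXiv:2306.02171 — 4 statements merged into one kernel-verified Lean document; each statement's English description precedes it below -/
import Mathlib

section
/- In the free metabelian Lie algebra on A, B, for all i, j ≥ 0 the sum of ad_w over all words w in A and B with exactly j occurrences of A and i occurrences of B, where ad_w denotes the composition of the corresponding ad operators, equals binom(i+j, i)·τ_{i,j} + binom(i+j−1, i−1)·ad_{σ_{i−1,j−1}} (with the conventions that the second term is 0 if i = 0 or j = 0). -/
variable (K : Type*) [Field K] [CharZero K]

/-- The free Lie algebra on two generators. -/
abbrev FL (K : Type*) [Field K] := FreeLieAlgebra K (Fin 2)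

/-- The second derived ideal `[[L,L],[L,L]]` of the free Lie algebra. -/
noncomputable def secondDerived (K : Type*) [Field K] : LieIdeal K (FL K) :=
  LieAlgebra.derivedSeries K (FL K) 2

/-- The free metabelian Lie algebra on two generators `A`, `B`. -/
abbrev W (K : Type*) [Field K] := FL K ⧸ secondDerived K

/-- The generator `A`. -/
noncomputable def genA (K : Type*) [Field K] : W K :=
  LieSubmodule.Quotient.mk (N := secondDerived K) (FreeLieAlgebra.of K 0)

/-- The generator `B`. -/
noncomputable def genB (K : Type*) [Field K] : W K :=
  LieSubmodule.Quotient.mk (N := secondDerived K) (FreeLieAlgebra.of K 1)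

/-- `τ_{u,v} = ad_B^u ∘ ad_A^v` as an endomorphism of the free metabelian Lie algebra. -/
noncomputable def tau (K : Type*) [Field K] (u v : ℕ) : Module.End K (W K) :=
  (LieAlgebra.ad K (W K) (genB K)) ^ u * (LieAlgebra.ad K (W K) (genA K)) ^ v

/-- `σ_{r,s} = ad_B^r ad_A^s [A,B]`. -/
noncomputable def sigma (K : Type*) [Field K] (r s : ℕ) : W K :=
  tau K r s ⁅genA K, genB K⁆

/-!
Write `a = ad A`, `b = ad B` and `c = ad [A,B] = ab - ba`. Because `W` is metabelian, `ad` of any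
bracket composed on the right with any `ad z` vanishes; in particular `ca = cb = 0`. Hence two
adjacent letters of a word commute unless the second one is the last letter, and the word
operator `ad_w` equals `τ_{i,j} = b^i a^j` unless `w` ends in `B` and contains an `A`, in which
case `a^j b = b a^j + a^{j-1} c` contributes exactly one extra term
`b^{i-1} a^{j-1} c = ad σ_{i-1,j-1}`. There are `binom(i+j, i)` words, and for `j > 0` exactly
`binom(i+j-1, i-1)` of them end in `B`.
-/

section WordProduct

variable {R : Type*} [Ring R] {a b c : R}

theorem pow_succ_mul_of_mul_eq (hab : a * b = b * a + c) (hca : c * a = 0) (q : ℕ) :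
    a ^ (q + 1) * b = b * a ^ (q + 1) + a ^ q * c := by
  induction q with
  | zero => simpa using hab
  | succ q ih =>
    have hcapow : c * a ^ (q + 1) = 0 := by rw [pow_succ', ← mul_assoc, hca, zero_mul]
    calc a ^ (q + 2) * b = a * (a ^ (q + 1) * b) := by rw [pow_succ' a (q + 1), mul_assoc]
      _ = (b * a + c) * a ^ (q + 1) + a ^ (q + 1) * c := by
        rw [ih, mul_add, ← mul_assoc, hab, ← mul_assoc, ← pow_succ']
      _ = b * a ^ (q + 2) + a ^ (q + 1) * c := by
        rw [add_mul, hcapow, add_zero, mul_assoc, ← pow_succ']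

theorem prod_map_word_eq (hab : a * b = b * a + c) (hca : c * a = 0) (hcb : c * b = 0)
    (l : List (Fin 2)) :
    (l.map fun t => if t = 0 then a else b).prod
      = b ^ l.count 1 * a ^ l.count 0
        + if l.getLast? = some 1 ∧ 0 ∈ l then b ^ (l.count 1 - 1) * a ^ (l.count 0 - 1) * c
          else 0 := by
  induction l using List.reverseRecOn with
  | nil => simp
  | append_singleton l t ih =>
    obtain rfl | rfl : t = 0 ∨ t = 1 := by omega
    · simp [ih, add_mul, mul_assoc, hca, pow_succ]
    · obtain hq | ⟨q, hq⟩ : l.count 0 = 0 ∨ ∃ q, l.count 0 = q + 1 := by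
        cases l.count 0 <;> simp
      · simp [ih, hq, List.count_eq_zero.mp hq, pow_succ]
      · have h0 : 0 ∈ l := List.count_pos_iff.mp (by omega)
        simp [ih, hq, h0, mul_add, add_mul, mul_assoc, hcb, pow_succ_mul_of_mul_eq hab hca,
          pow_succ b]

end WordProduct

section Metabelian

variable {R L : Type*} [CommRing R] [LieRing L] [LieAlgebra R L]

open LieAlgebra

theorem lie_lie_lie_eq_zero_of_quotient_derivedSeries_two
    (x y z w : L ⧸ derivedSeries R L 2) : ⁅⁅x, y⁆, ⁅z, w⁆⁆ = 0 := by
  obtain ⟨x, rfl⟩ := LieSubmodule.Quotient.surjective_mk' _ x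
  obtain ⟨y, rfl⟩ := LieSubmodule.Quotient.surjective_mk' _ y
  obtain ⟨z, rfl⟩ := LieSubmodule.Quotient.surjective_mk' _ z
  obtain ⟨w, rfl⟩ := LieSubmodule.Quotient.surjective_mk' _ w
  simp only [LieSubmodule.Quotient.mk'_apply, ← LieSubmodule.Quotient.mk_bracket,
    LieSubmodule.Quotient.mk_eq_zero', derivedSeries_def, derivedSeriesOfIdeal_succ,
    derivedSeriesOfIdeal_zero]
  have hmem (u v : L) : ⁅u, v⁆ ∈ ⁅(⊤ : LieIdeal R L), ⊤⁆ :=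
    LieSubmodule.lie_mem_lie (LieSubmodule.mem_top u) (LieSubmodule.mem_top v)
  exact LieSubmodule.lie_mem_lie (hmem x y) (hmem z w)

theorem ad_lie_eq_sub (x y : L) :
    ad R L ⁅x, y⁆ = ad R L x * ad R L y - ad R L y * ad R L x := by
  ext z
  simp only [LinearMap.sub_apply, Module.End.mul_apply, ad_apply, lie_lie]

theorem ad_lie_mul_ad_eq_zero_of_metabelian (hL : ∀ x y z w : L, ⁅⁅x, y⁆, ⁅z, w⁆⁆ = 0)
    (x y z : L) : ad R L ⁅x, y⁆ * ad R L z = 0 := by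
  ext w
  simpa using hL x y z w

theorem ad_ad_pow_apply {x y : L} (hy : ∀ z, ad R L y * ad R L z = 0) (n : ℕ) :
    ad R L ((ad R L x ^ n) y) = ad R L x ^ n * ad R L y := by
  induction n with
  | zero => simp
  | succ n ih =>
    rw [pow_succ', Module.End.mul_apply, ad_apply, ad_lie_eq_sub, ih, mul_assoc, mul_assoc, hy,
      mul_zero, sub_zero]

end Metabelian

theorem W.ad_lie_mul_ad_eq_zero (K : Type*) [Field K] (x y z : W K) :
    LieAlgebra.ad K (W K) ⁅x, y⁆ * LieAlgebra.ad K (W K) z = 0 :=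
  ad_lie_mul_ad_eq_zero_of_metabelian lie_lie_lie_eq_zero_of_quotient_derivedSeries_two x y z

theorem ad_sigma (K : Type*) [Field K] (r s : ℕ) :
    LieAlgebra.ad K (W K) (sigma K r s) = LieAlgebra.ad K (W K) (genB K) ^ r
      * LieAlgebra.ad K (W K) (genA K) ^ s * LieAlgebra.ad K (W K) ⁅genA K, genB K⁆ := by
  have hc := W.ad_lie_mul_ad_eq_zero K (genA K) (genB K)
  have hσ (z : W K) :
      LieAlgebra.ad K (W K) ((LieAlgebra.ad K (W K) (genA K) ^ s) ⁅genA K, genB K⁆)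
        * LieAlgebra.ad K (W K) z = 0 := by
    rw [ad_ad_pow_apply hc, mul_assoc, hc, mul_zero]
  rw [sigma, tau, Module.End.mul_apply, ad_ad_pow_apply hσ, ad_ad_pow_apply hc, mul_assoc]

theorem prod_map_ad_eq_tau_add (K : Type*) [Field K] (l : List (Fin 2)) :
    (l.map fun t => if t = 0 then LieAlgebra.ad K (W K) (genA K)
        else LieAlgebra.ad K (W K) (genB K)).prod
      = tau K (l.count 1) (l.count 0)
        + if l.getLast? = some 1 ∧ 0 ∈ l then
            LieAlgebra.ad K (W K) (sigma K (l.count 1 - 1) (l.count 0 - 1)) else 0 := by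
  have hc := W.ad_lie_mul_ad_eq_zero K (genA K) (genB K)
  have hab : LieAlgebra.ad K (W K) (genA K) * LieAlgebra.ad K (W K) (genB K)
      = LieAlgebra.ad K (W K) (genB K) * LieAlgebra.ad K (W K) (genA K)
        + LieAlgebra.ad K (W K) ⁅genA K, genB K⁆ := by
    rw [ad_lie_eq_sub]; abel
  rw [prod_map_word_eq hab (hc _) (hc _), ad_sigma, tau]

open Finset

theorem List.count_zero_add_count_one (l : List (Fin 2)) : l.count 0 + l.count 1 = l.length := by
  induction l with
  | nil => rfl
  | cons t l ih =>
    obtain rfl | rfl : t = 0 ∨ t = 1 := by omega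
    all_goals simp [← ih]; omega

theorem List.count_ofFn {α : Type*} [DecidableEq α] {n : ℕ} (f : Fin n → α) (t : α) :
    (List.ofFn f).count t = #{k | f k = t} := by
  rw [← Multiset.coe_count, ← Fin.univ_val_map, Multiset.count_map, card_def, filter_val]
  simp [eq_comm]

theorem List.getLast?_ofFn {α : Type*} {n : ℕ} (hn : 0 < n) (f : Fin n → α) :
    (List.ofFn f).getLast? = some (f ⟨n - 1, by omega⟩) := by
  simp [List.getLast?_eq_getElem?, hn]

section Counting

variable {α : Type*} [Fintype α] [DecidableEq α]

theorem card_filter_zeroSet (Q : Finset α → Prop) [DecidablePred Q] :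
    #{f : α → Fin 2 | Q {k | f k = 0}} = #{s : Finset α | Q s} := by
  refine card_nbij' (fun f => ({k | f k = 0} : Finset α)) (fun s k => if k ∈ s then 0 else 1)
    ?_ ?_ ?_ ?_
  · intro f hf
    simpa using hf
  · intro s hs
    simp only [coe_filter, mem_univ, true_and, Set.mem_ofPred_eq] at hs ⊢
    convert hs using 2
    ext k
    by_cases hk : k ∈ s <;> simp [hk]
  · intro f _
    funext k
    by_cases hk : f k = 0
    · simp [hk]
    · simp [Fin.eq_one_of_ne_zero _ hk]
  · intro s _
    ext k
    by_cases hk : k ∈ s <;> simp [hk]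

theorem card_filter_card_zeroSet_eq (j : ℕ) :
    #{f : α → Fin 2 | #{k | f k = 0} = j} = (Fintype.card α).choose j := by
  rw [card_filter_zeroSet (fun s => #s = j), ← powerset_univ, ← powersetCard_eq_filter,
    card_powersetCard, card_univ]

theorem card_filter_card_zeroSet_eq_and_apply_eq_one (j : ℕ) (p : α) :
    #{f : α → Fin 2 | #{k | f k = 0} = j ∧ f p = 1} = (Fintype.card α - 1).choose j := by
  have hp (f : α → Fin 2) : f p = 1 ↔ p ∉ ({k | f k = 0} : Finset α) := by
    simp only [mem_filter, mem_univ, true_and]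
    omega
  simp only [hp]
  rw [card_filter_zeroSet (fun s => #s = j ∧ p ∉ s), ← card_univ,
    ← card_erase_of_mem (mem_univ p), ← card_powersetCard, powersetCard_eq_filter]
  congr 1
  ext s
  simp [subset_erase, and_comm]

end Counting

theorem count_ofFn_of_card_zeroSet_eq {i j : ℕ} {f : Fin (i + j) → Fin 2}
    (hf : #{k | f k = 0} = j) : (List.ofFn f).count 0 = j ∧ (List.ofFn f).count 1 = i := by
  have hlen := List.count_zero_add_count_one (List.ofFn f)
  rw [List.length_ofFn, List.count_ofFn, hf] at hlen
  exact ⟨by rw [List.count_ofFn, hf], by omega⟩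

theorem card_filter_getLast?_eq_one_and_zero_mem (i j : ℕ) :
    #((univ.filter fun f : Fin (i + j) → Fin 2 => #{k | f k = 0} = j).filter
        fun f => (List.ofFn f).getLast? = some 1 ∧ 0 ∈ List.ofFn f)
      = if i = 0 ∨ j = 0 then 0 else (i + j - 1).choose (i - 1) := by
  split_ifs with hij
  · rw [card_eq_zero, filter_eq_empty_iff]
    rintro f hf ⟨hlast, hzero⟩
    obtain ⟨hj, hi⟩ := count_ofFn_of_card_zeroSet_eq (mem_filter.mp hf).2
    have := List.count_pos_iff.mpr (List.mem_of_getLast? hlast)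
    have := List.count_pos_iff.mpr hzero
    omega
  · have hn : 0 < i + j := by omega
    rw [filter_filter, filter_congr (q := fun f : Fin (i + j) → Fin 2 =>
        #{k | f k = 0} = j ∧ f ⟨i + j - 1, by omega⟩ = 1),
      card_filter_card_zeroSet_eq_and_apply_eq_one, Fintype.card_fin,
      show i + j - 1 = i - 1 + j by omega, Nat.choose_symm_add]
    refine fun f _ => and_congr_right fun hf => ?_
    rw [List.getLast?_ofFn hn, Option.some_inj, ← List.count_pos_iff,
      (count_ofFn_of_card_zeroSet_eq hf).1]
    omega

/-- Words are encoded as functions `Fin (i+j) → Fin 2`, the letter `0` standing for `A` and `1`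
for `B`. -/
theorem stmt8 (i j : ℕ) :
    ∑ f ∈ Finset.univ.filter
        (fun f : Fin (i + j) → Fin 2 => (Finset.univ.filter fun k => f k = 0).card = j),
      ((List.ofFn f).map
        (fun t => if t = 0 then LieAlgebra.ad K (W K) (genA K)
          else LieAlgebra.ad K (W K) (genB K))).prod
      = ((i + j).choose i) • tau K i j
        + (if i = 0 ∨ j = 0 then 0
            else ((i + j - 1).choose (i - 1)) • LieAlgebra.ad K (W K) (sigma K (i - 1) (j - 1))) := by
  rw [sum_congr rfl fun f hf => by
      rw [prod_map_ad_eq_tau_add, (count_ofFn_of_card_zeroSet_eq (mem_filter.mp hf).2).1,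
        (count_ofFn_of_card_zeroSet_eq (mem_filter.mp hf).2).2],
    sum_add_distrib, sum_const, card_filter_card_zeroSet_eq, Fintype.card_fin,
    ← Nat.choose_symm_add, ← sum_filter, sum_const, card_filter_getLast?_eq_one_and_zero_mem,
    ite_smul, zero_smul]
end

section
/- In the free metabelian Lie algebra on A, B, for i ≥ 1 and j ≥ 0 one has the operator identity τ_{i−1,j}∘ad_B = τ_{i,j} + ad_{σ_{i−1,j−1}} when j ≥ 1, and τ_{i−1,0}∘ad_B = τ_{i,0}, as endomorphisms of the Lie algebra. -/
variable (K : Type*) [Field K] [CharZero K]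

/-! In a metabelian Lie algebra `ad_{[p,q]} ∘ ad_x = 0`. Hence commuting `ad_A^{m+1}` past
`ad_B` leaves the single correction term `ad_A^m ∘ ad_{[A,B]}`, and `ad_b ∘ ad_z = ad_{[b,z]}`
whenever `ad_z ∘ ad = 0`, which turns `ad_B^k ∘ ad_A^m ∘ ad_{[A,B]}` into `ad_{σ_{k,m}}`. -/

namespace LieAlgebra

variable {R L : Type*} [CommRing R] [LieRing L] [LieAlgebra R L]

theorem ad_mul_ad (x y : L) :
    ad R L x * ad R L y = ad R L y * ad R L x + ad R L ⁅x, y⁆ := by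
  ext z
  simp only [Module.End.mul_apply, LinearMap.add_apply, ad_apply]
  rw [leibniz_lie, add_comm]

theorem lie_lie_lie_lie_mem_derivedSeries_two (p q x y : L) :
    ⁅⁅p, q⁆, ⁅x, y⁆⁆ ∈ derivedSeries R L 2 := by
  have hpq : ⁅p, q⁆ ∈ derivedSeries R L 1 :=
    LieSubmodule.lie_mem_lie (LieSubmodule.mem_top p) (LieSubmodule.mem_top q)
  have hxy : ⁅x, y⁆ ∈ derivedSeries R L 1 :=
    LieSubmodule.lie_mem_lie (LieSubmodule.mem_top x) (LieSubmodule.mem_top y)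
  exact LieSubmodule.lie_mem_lie hpq hxy

theorem lie_lie_lie_lie_quotient_derivedSeries_two (p q x y : L ⧸ derivedSeries R L 2) :
    ⁅⁅p, q⁆, ⁅x, y⁆⁆ = 0 := by
  obtain ⟨p, rfl⟩ := LieSubmodule.Quotient.surjective_mk' _ p
  obtain ⟨q, rfl⟩ := LieSubmodule.Quotient.surjective_mk' _ q
  obtain ⟨x, rfl⟩ := LieSubmodule.Quotient.surjective_mk' _ x
  obtain ⟨y, rfl⟩ := LieSubmodule.Quotient.surjective_mk' _ y
  simp only [LieSubmodule.Quotient.mk'_apply, ← LieSubmodule.Quotient.mk_bracket]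
  exact LieSubmodule.Quotient.mk_eq_zero'.mpr (lie_lie_lie_lie_mem_derivedSeries_two p q x y)

section Metabelian

variable (hL : ∀ p q x y : L, ⁅⁅p, q⁆, ⁅x, y⁆⁆ = 0)
include hL

theorem ad_lie_mul_ad (p q x : L) : ad R L ⁅p, q⁆ * ad R L x = 0 := by
  ext y
  simpa using hL p q x y

-- `hz` says that `z` centralizes `[L, L]`.
theorem ad_pow_apply_mul_ad {z : L} (hz : ∀ x, ad R L z * ad R L x = 0) (b : L) (r : ℕ)
    (x : L) : ad R L ((ad R L b ^ r) z) * ad R L x = 0 := by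
  cases r with
  | zero => simpa using hz x
  | succ r =>
    rw [pow_succ', Module.End.mul_apply, ad_apply]
    exact ad_lie_mul_ad hL _ _ x

theorem ad_pow_mul_ad {z : L} (hz : ∀ x, ad R L z * ad R L x = 0) (b : L) (r : ℕ) :
    ad R L b ^ r * ad R L z = ad R L ((ad R L b ^ r) z) := by
  induction r with
  | zero => simp
  | succ r ih =>
    rw [pow_succ', mul_assoc, ih, ad_mul_ad, ad_pow_apply_mul_ad hL hz, zero_add,
      Module.End.mul_apply, ad_apply]

theorem ad_pow_succ_mul_ad (a b : L) (m : ℕ) :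
    ad R L a ^ (m + 1) * ad R L b
      = ad R L b * ad R L a ^ (m + 1) + ad R L a ^ m * ad R L ⁅a, b⁆ := by
  induction m with
  | zero => rw [zero_add, pow_one, pow_zero, one_mul, ad_mul_ad]
  | succ m ih =>
    have hkill : ad R L ⁅a, b⁆ * ad R L a ^ (m + 1) = 0 := by
      rw [pow_succ', ← mul_assoc, ad_lie_mul_ad hL, zero_mul]
    calc ad R L a ^ (m + 1 + 1) * ad R L b
        = ad R L a * (ad R L a ^ (m + 1) * ad R L b) := by rw [pow_succ', mul_assoc]
      _ = ad R L a * ad R L b * ad R L a ^ (m + 1) + ad R L a ^ (m + 1) * ad R L ⁅a, b⁆ := by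
        rw [ih, mul_add, ← mul_assoc, ← mul_assoc, ← pow_succ']
      _ = ad R L b * ad R L a ^ (m + 1 + 1) + ad R L a ^ (m + 1) * ad R L ⁅a, b⁆ := by
        rw [ad_mul_ad, add_mul, hkill, add_zero, mul_assoc, ← pow_succ']

theorem ad_pow_mul_ad_pow_succ_mul_ad (a b : L) (k m : ℕ) :
    ad R L b ^ k * ad R L a ^ (m + 1) * ad R L b
      = ad R L b ^ (k + 1) * ad R L a ^ (m + 1)
        + ad R L ((ad R L b ^ k * ad R L a ^ m) ⁅a, b⁆) := by
  have hab := ad_lie_mul_ad (R := R) hL a b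
  rw [mul_assoc, ad_pow_succ_mul_ad hL, mul_add, ← mul_assoc, ← pow_succ,
    ad_pow_mul_ad hL hab, ad_pow_mul_ad hL (ad_pow_apply_mul_ad hL hab a m),
    Module.End.mul_apply]

end Metabelian

end LieAlgebra

/-- for `i ≥ 1`, one has `τ_{i−1,j}∘ad_B = τ_{i,j} + ad_{σ_{i−1,j−1}}` when
`j ≥ 1`, and `τ_{i−1,0}∘ad_B = τ_{i,0}`, as endomorphisms of the free metabelian Lie
algebra. -/
theorem stmt9 :
    ∀ i j : ℕ, 1 ≤ i →
      ((1 ≤ j →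
          tau K (i - 1) j * LieAlgebra.ad K (W K) (genB K)
            = tau K i j + LieAlgebra.ad K (W K) (sigma K (i - 1) (j - 1))) ∧
        tau K (i - 1) 0 * LieAlgebra.ad K (W K) (genB K) = tau K i 0) := by
  have hW : ∀ p q x y : W K, ⁅⁅p, q⁆, ⁅x, y⁆⁆ = 0 :=
    LieAlgebra.lie_lie_lie_lie_quotient_derivedSeries_two
  intro i j hi
  obtain ⟨k, rfl⟩ : ∃ k, i = k + 1 := ⟨i - 1, by omega⟩
  refine ⟨fun hj => ?_, by simp only [tau, pow_zero, mul_one, add_tsub_cancel_right, pow_succ]⟩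
  obtain ⟨m, rfl⟩ : ∃ m, j = m + 1 := ⟨j - 1, by omega⟩
  simpa only [tau, sigma, add_tsub_cancel_right] using
    LieAlgebra.ad_pow_mul_ad_pow_succ_mul_ad hW (genA K) (genB K) k m
end

section
/- Let w be the free metabelian Lie algebra on A, B over a field K of characteristic zero, realized inside End_K(w) via the adjoint representation. Then ad : w → End_K(w) is injective, and the image exp(ad(w)) (exponentials of adjoint operators, defined on the completion) is contained in the closed K-span of the operators τ_{u,v} = ad_B^u ad_A^v (u,v ≥ 0) and ad_{σ_{r,s}} (r,s ≥ 0). -/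
/-!
Send `A` and `B` to the matrices `[[0, 0], [0, x]]` and `[[0, 0], [1, y]]` over `K[x, y]`.
Matrices with vanishing first row form a metabelian Lie algebra, so this defines a Lie morphism
`w → gl₂(K[x, y])`, and it sends `σ_{r,s}` to `y^r x^(s+1) E₁₀`. The elements `A`, `B`,
`σ_{r,s}` span `w` (their span is closed under brackets) and have linearly independent images,
so the morphism is injective; a matrix of this shape commuting with the images of `A` and `B`
is zero, so `w` has trivial center.

For the powers of `ad_x`: in a metabelian Lie algebra `ad_σ ad_y = 0` for `σ ∈ [w, w]` and
`ad_A ad_B^(u+1) = ad_B^(u+1) ad_A + ad_{σ_{u,0}}`. Hence the span of the `τ_{u,v}` and the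
`ad_{σ_{r,s}}` is stable under left multiplication by `ad_A`, `ad_B`, `ad_{σ_{r,s}}`, and so by
every `ad_x`.
-/

variable (K : Type*) [Field K] [CharZero K]

open LieAlgebra

section LieSpan

variable {R L : Type*} [CommRing R] [LieRing L] [LieAlgebra R L]

theorem LieSubalgebra.coe_lieSpan_eq_span_of_forall_lie_mem {s : Set L}
    (hs : ∀ x ∈ s, ∀ y ∈ s, ⁅x, y⁆ ∈ Submodule.span R s) :
    (lieSpan R L s).toSubmodule = Submodule.span R s := by
  suffices h : ∀ {x y}, x ∈ Submodule.span R s → y ∈ Submodule.span R s →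
      ⁅x, y⁆ ∈ Submodule.span R s by
    refine le_antisymm ?_ submodule_span_le_lieSpan
    change _ ≤ ({ Submodule.span R s with lie_mem' := h } : LieSubalgebra R L)
    rw [lieSpan_le]
    exact Submodule.subset_span
  intro x y hx hy
  induction hx, hy using Submodule.span_induction₂ with
  | mem_mem x y hx hy => exact hs x hx y hy
  | zero_left => simp
  | zero_right => simp
  | add_left _ _ _ _ _ _ h₁ h₂ => simpa using add_mem h₁ h₂
  | add_right _ _ _ _ _ _ h₁ h₂ => simpa using add_mem h₁ h₂
  | smul_left _ _ _ _ _ h => simpa using Submodule.smul_mem _ _ h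
  | smul_right _ _ _ _ _ h => simpa using Submodule.smul_mem _ _ h

variable (R) in
theorem FreeLieAlgebra.lieSpan_range_of (X : Type*) :
    LieSubalgebra.lieSpan R (FreeLieAlgebra R X) (Set.range (of R)) = ⊤ := by
  set S := LieSubalgebra.lieSpan R (FreeLieAlgebra R X) (Set.range (of R))
  let g : FreeLieAlgebra R X →ₗ⁅R⁆ S :=
    lift R fun x => ⟨of R x, LieSubalgebra.subset_lieSpan ⟨x, rfl⟩⟩
  have hg : S.incl.comp g = LieHom.id := hom_ext (R := R) fun x => by simp [g]
  rw [eq_top_iff]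
  intro y _
  have hy : S.incl (g y) = y := by rw [← LieHom.comp_apply, hg, LieHom.id_apply]
  exact hy ▸ (g y).2

end LieSpan

section Quotient

variable {R L L' : Type*} [CommRing R] [LieRing L] [LieAlgebra R L] [LieRing L']
  [LieAlgebra R L'] (I : LieIdeal R L)

def LieIdeal.mkQ : L →ₗ⁅R⁆ L ⧸ I :=
  { I.toSubmodule.mkQ with map_lie' := rfl }

theorem LieIdeal.mkQ_surjective : Function.Surjective I.mkQ :=
  Submodule.Quotient.mk_surjective _

def LieIdeal.liftQ (f : L →ₗ⁅R⁆ L') (hf : I ≤ f.ker) : L ⧸ I →ₗ⁅R⁆ L' :=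
  { I.toSubmodule.liftQ f.toLinearMap hf with
    map_lie' := by
      rintro ⟨x⟩ ⟨y⟩
      exact f.map_lie x y }

theorem derivedSeries_quotient_derivedSeries_eq_bot (k : ℕ) :
    derivedSeries R (L ⧸ derivedSeries R L k) k = ⊥ := by
  rw [← LieIdeal.derivedSeries_map_eq k (LieIdeal.mkQ_surjective _), LieIdeal.map_eq_bot_iff]
  intro x hx
  exact (LieSubmodule.Quotient.mk_eq_zero' (N := derivedSeries R L k)).mpr hx

theorem derivedSeries_le_ker (f : L →ₗ⁅R⁆ L') {k : ℕ} (h : derivedSeries R L' k = ⊥) :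
    derivedSeries R L k ≤ f.ker := by
  rw [← LieIdeal.map_eq_bot_iff, ← le_bot_iff, ← h]
  exact LieIdeal.derivedSeries_map_le k

end Quotient

section LinearIndependent

variable {R M M' ι ι' : Type*} [CommRing R] [AddCommGroup M] [Module R M] [AddCommGroup M']
  [Module R M'] (f : M →ₗ[R] M')

theorem LinearMap.injective_of_linearIndependent_comp {v : ι → M}
    (hv : Submodule.span R (Set.range v) = ⊤) (hfv : LinearIndependent R (f ∘ v)) :
    Function.Injective f := by
  have := Submodule.range_ker_disjoint hfv
  rwa [hv, top_disjoint, LinearMap.ker_eq_bot] at this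

theorem LinearIndependent.sum_elim_of_comp {v : ι → M} {v' : ι' → M}
    (hv : LinearIndependent R (f ∘ v)) (hv' : LinearIndependent R v')
    (hfv' : ∀ i, f (v' i) = 0) :
    LinearIndependent R (Sum.elim v v') := by
  refine (hv.of_comp f).sum_type hv' (Disjoint.mono_right ?_ (Submodule.range_ker_disjoint hv))
  rw [Submodule.span_le]
  rintro _ ⟨i, rfl⟩
  exact hfv' i

end LinearIndependent

section Metabelian

variable {R L : Type*} [CommRing R] [LieRing L] [LieAlgebra R L]

theorem lie_mem_derivedSeries_one (x y : L) : ⁅x, y⁆ ∈ derivedSeries R L 1 := by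
  rw [derivedSeries_def, derivedSeriesOfIdeal_succ, derivedSeriesOfIdeal_zero]
  exact LieSubmodule.lie_mem_lie (LieSubmodule.mem_top x) (LieSubmodule.mem_top y)

theorem derivedSeries_two_eq_bot_of_lie_lie_eq_zero
    (h : ∀ a b c d : L, ⁅⁅a, b⁆, ⁅c, d⁆⁆ = 0) : derivedSeries R L 2 = ⊥ := by
  have hD1 : (derivedSeries R L 1).toSubmodule =
      Submodule.span R {m | ∃ a b : L, ⁅a, b⁆ = m} := by
    rw [derivedSeries_def, derivedSeriesOfIdeal_succ, derivedSeriesOfIdeal_zero,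
      LieSubmodule.lieIdeal_oper_eq_linear_span]
    simp
  rw [eq_bot_iff, derivedSeries_def, derivedSeriesOfIdeal_succ, ← derivedSeries_def,
    LieSubmodule.lie_le_iff]
  intro c hc d hd
  rw [← LieSubmodule.mem_toSubmodule, hD1] at hc hd
  rw [LieSubmodule.mem_bot]
  induction hc, hd using Submodule.span_induction₂ with
  | mem_mem c d hc hd =>
    obtain ⟨a, b, rfl⟩ := hc
    obtain ⟨a', b', rfl⟩ := hd
    exact h a b a' b'
  | zero_left => simp
  | zero_right => simp
  | add_left _ _ _ _ _ _ h₁ h₂ => simp [h₁, h₂]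
  | add_right _ _ _ _ _ _ h₁ h₂ => simp [h₁, h₂]
  | smul_left _ _ _ _ _ h => simp [h]
  | smul_right _ _ _ _ _ h => simp [h]

theorem lie_eq_zero_of_mem_derivedSeries_one (hL : derivedSeries R L 2 = ⊥) {c d : L}
    (hc : c ∈ derivedSeries R L 1) (hd : d ∈ derivedSeries R L 1) : ⁅c, d⁆ = 0 := by
  have : ⁅c, d⁆ ∈ derivedSeries R L 2 := by
    rw [derivedSeries_def, derivedSeriesOfIdeal_succ, ← derivedSeries_def]
    exact LieSubmodule.lie_mem_lie hc hd
  rwa [hL, LieSubmodule.mem_bot] at this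

theorem ad_pow_apply_mem (I : LieIdeal R L) (y : L) (r : ℕ) {c : L} (hc : c ∈ I) :
    (ad R L y ^ r) c ∈ I := by
  induction r with
  | zero => simpa using hc
  | succ r ih =>
    rw [pow_succ', Module.End.mul_apply, ad_apply]
    exact I.lie_mem ih

theorem ad_mul_ad_eq_zero_of_mem (hL : derivedSeries R L 2 = ⊥) {c : L}
    (hc : c ∈ derivedSeries R L 1) (y : L) : ad R L c * ad R L y = 0 := by
  ext z
  exact lie_eq_zero_of_mem_derivedSeries_one hL hc (lie_mem_derivedSeries_one y z)

theorem ad_mul_ad_of_mem (hL : derivedSeries R L 2 = ⊥) (x : L) {c : L}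
    (hc : c ∈ derivedSeries R L 1) : ad R L x * ad R L c = ad R L ⁅x, c⁆ := by
  ext z
  rw [Module.End.mul_apply, ad_apply, ad_apply, ad_apply, leibniz_lie,
    lie_eq_zero_of_mem_derivedSeries_one hL hc (lie_mem_derivedSeries_one x z), add_zero]

theorem lie_ad_pow_apply_of_mem (hL : derivedSeries R L 2 = ⊥) (x y : L) (r : ℕ) {c : L}
    (hc : c ∈ derivedSeries R L 1) : ⁅x, (ad R L y ^ r) c⁆ = (ad R L y ^ r) ⁅x, c⁆ := by
  induction r with
  | zero => simp
  | succ r ih =>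
    rw [pow_succ', Module.End.mul_apply, Module.End.mul_apply, ad_apply, ad_apply, leibniz_lie,
      lie_eq_zero_of_mem_derivedSeries_one hL (lie_mem_derivedSeries_one x y)
        (ad_pow_apply_mem _ y r hc), zero_add, ih]

theorem ad_mul_ad_pow_succ (hL : derivedSeries R L 2 = ⊥) (x y : L) (u : ℕ) :
    ad R L x * ad R L y ^ (u + 1) =
      ad R L y ^ (u + 1) * ad R L x + ad R L ((ad R L y ^ u) ⁅x, y⁆) := by
  have hxy : ad R L x * ad R L y = ad R L y * ad R L x + ad R L ⁅x, y⁆ := by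
    ext z
    rw [LinearMap.add_apply, Module.End.mul_apply, Module.End.mul_apply, ad_apply, ad_apply,
      ad_apply, ad_apply, ad_apply, leibniz_lie, add_comm]
  induction u with
  | zero => simpa using hxy
  | succ u ih =>
    have hσ := ad_pow_apply_mem _ y u (lie_mem_derivedSeries_one (R := R) x y)
    have hkill : ad R L ⁅x, y⁆ * ad R L y ^ (u + 1) = 0 := by
      rw [pow_succ', ← mul_assoc, ad_mul_ad_eq_zero_of_mem hL (lie_mem_derivedSeries_one x y),
        zero_mul]
    rw [pow_succ' _ (u + 1), ← mul_assoc, hxy, add_mul, hkill, add_zero, mul_assoc, ih, mul_add,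
      ← mul_assoc, ← pow_succ', ad_mul_ad_of_mem hL y hσ, pow_succ' _ u, Module.End.mul_apply,
      ad_apply]

end Metabelian

theorem MvPolynomial.linearIndependent_X_pow_mul_X_pow {R σ : Type*} [CommRing R] {i j : σ}
    (hij : i ≠ j) :
    LinearIndependent R fun p : ℕ × ℕ => (X i : MvPolynomial σ R) ^ p.1 * X j ^ p.2 := by
  have hmon : (fun p : ℕ × ℕ => (X i : MvPolynomial σ R) ^ p.1 * X j ^ p.2) =
      basisMonomials σ R ∘ fun p => Finsupp.single i p.1 + Finsupp.single j p.2 := by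
    ext1 p
    simp [X_pow_eq_monomial, monomial_mul]
  rw [hmon]
  refine (basisMonomials σ R).linearIndependent.comp _ fun p q h => ?_
  have hi := DFunLike.congr_fun h i
  have hj := DFunLike.congr_fun h j
  simp [hij, hij.symm] at hi hj
  exact Prod.ext hi hj

attribute [local instance] LieRing.ofAssociativeRing

section RowZero

open Matrix

variable {R A : Type*} [CommRing R] [CommRing A] [Algebra R A]

theorem Matrix.lie_eq_single_of_row_zero {M N : Matrix (Fin 2) (Fin 2) A}
    (hM : ∀ j, M 0 j = 0) (hN : ∀ j, N 0 j = 0) :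
    ⁅M, N⁆ = single 1 0 (M 1 1 * N 1 0 - N 1 1 * M 1 0) := by
  ext i j
  fin_cases i <;> fin_cases j <;> simp [Ring.lie_def, mul_apply, Fin.sum_univ_two, hM, hN]
  ring

variable (R A)

def rowZeroLieSubalgebra : LieSubalgebra R (Matrix (Fin 2) (Fin 2) A) where
  carrier := {M | ∀ j, M 0 j = 0}
  add_mem' hM hN j := by simp [hM j, hN j]
  zero_mem' _ := rfl
  smul_mem' c M hM j := by simp [hM j]
  lie_mem' hM hN j := by simp [lie_eq_single_of_row_zero hM hN]

variable {R A}

theorem mem_rowZeroLieSubalgebra {M : Matrix (Fin 2) (Fin 2) A} :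
    M ∈ rowZeroLieSubalgebra R A ↔ ∀ j, M 0 j = 0 := Iff.rfl

theorem derivedSeries_rowZeroLieSubalgebra_two_eq_bot :
    derivedSeries R (rowZeroLieSubalgebra R A) 2 = ⊥ := by
  refine derivedSeries_two_eq_bot_of_lie_lie_eq_zero fun a b c d => ?_
  have hsingle : ∀ p : A, ∀ j, single (1 : Fin 2) (0 : Fin 2) p 0 j = 0 := fun p j => by simp
  ext : 1
  rw [LieSubalgebra.coe_bracket, LieSubalgebra.coe_bracket, LieSubalgebra.coe_bracket,
    lie_eq_single_of_row_zero a.2 b.2, lie_eq_single_of_row_zero c.2 d.2,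
    lie_eq_single_of_row_zero (hsingle _) (hsingle _)]
  simp

end RowZero

namespace FreeMetabelian

omit [CharZero K]

theorem derivedSeries_two_eq_bot : derivedSeries K (W K) 2 = ⊥ :=
  derivedSeries_quotient_derivedSeries_eq_bot 2

theorem sigma_mem_derivedSeries_one (r s : ℕ) : sigma K r s ∈ derivedSeries K (W K) 1 :=
  ad_pow_apply_mem _ _ r (ad_pow_apply_mem _ _ s (lie_mem_derivedSeries_one _ _))

theorem sigma_zero_zero : sigma K 0 0 = ⁅genA K, genB K⁆ := by
  simp [sigma, tau]

theorem lie_genB_sigma (r s : ℕ) : ⁅genB K, sigma K r s⁆ = sigma K (r + 1) s := by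
  simp only [sigma, tau, pow_succ', Module.End.mul_apply, ad_apply]

theorem lie_genA_sigma (r s : ℕ) : ⁅genA K, sigma K r s⁆ = sigma K r (s + 1) := by
  simp only [sigma, tau, Module.End.mul_apply]
  rw [lie_ad_pow_apply_of_mem (derivedSeries_two_eq_bot K) _ _ _
    (ad_pow_apply_mem _ _ s (lie_mem_derivedSeries_one _ _)), pow_succ', Module.End.mul_apply,
    ad_apply]

noncomputable def basisFamily : Fin 2 ⊕ ℕ × ℕ → W K :=
  Sum.elim ![genA K, genB K] fun p => sigma K p.1 p.2

theorem lie_basisFamily_mem_span (i j : Fin 2 ⊕ ℕ × ℕ) :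
    ⁅basisFamily K i, basisFamily K j⁆ ∈ Submodule.span K (Set.range (basisFamily K)) := by
  have hσ (r s : ℕ) : sigma K r s ∈ Submodule.span K (Set.range (basisFamily K)) :=
    Submodule.subset_span ⟨Sum.inr (r, s), rfl⟩
  have hgen (j) : ⁅genA K, basisFamily K j⁆ ∈ Submodule.span K (Set.range (basisFamily K)) ∧
      ⁅genB K, basisFamily K j⁆ ∈ Submodule.span K (Set.range (basisFamily K)) := by
    rcases j with j | ⟨r, s⟩
    · fin_cases j
      · simpa [basisFamily, ← lie_skew (genB K), ← sigma_zero_zero] using hσ 0 0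
      · simpa [basisFamily, ← sigma_zero_zero] using hσ 0 0
    · change ⁅genA K, sigma K r s⁆ ∈ _ ∧ ⁅genB K, sigma K r s⁆ ∈ _
      rw [lie_genA_sigma, lie_genB_sigma]
      exact ⟨hσ r (s + 1), hσ (r + 1) s⟩
  rcases i with i | ⟨r, s⟩
  · fin_cases i
    exacts [(hgen j).1, (hgen j).2]
  · rw [← lie_skew]
    refine neg_mem ?_
    rcases j with j | ⟨p, q⟩
    · fin_cases j
      exacts [(hgen _).1, (hgen _).2]
    · rw [basisFamily, Sum.elim_inr, Sum.elim_inr, lie_eq_zero_of_mem_derivedSeries_one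
        (derivedSeries_two_eq_bot K) (sigma_mem_derivedSeries_one K p q)
        (sigma_mem_derivedSeries_one K r s)]
      exact zero_mem _

theorem span_range_basisFamily : Submodule.span K (Set.range (basisFamily K)) = ⊤ := by
  refine eq_top_iff.mpr fun x _ => ?_
  rw [← LieSubalgebra.coe_lieSpan_eq_span_of_forall_lie_mem ?_, LieSubalgebra.mem_toSubmodule]
  · obtain ⟨y, rfl⟩ := (secondDerived K).mkQ_surjective x
    have hy : (secondDerived K).mkQ y ∈ (LieSubalgebra.lieSpan K (FL K)
        (Set.range (FreeLieAlgebra.of K))).map (secondDerived K).mkQ := by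
      rw [FreeLieAlgebra.lieSpan_range_of]
      exact (LieSubalgebra.mem_map _ _ _).mpr ⟨y, trivial, rfl⟩
    rw [LieSubalgebra.map_lieSpan] at hy
    refine LieSubalgebra.lieSpan_mono ?_ hy
    rintro _ ⟨_, ⟨i, rfl⟩, rfl⟩
    fin_cases i
    exacts [⟨Sum.inl 0, rfl⟩, ⟨Sum.inl 1, rfl⟩]
  · rintro _ ⟨i, rfl⟩ _ ⟨j, rfl⟩
    exact lie_basisFamily_mem_span K i j

noncomputable def tauSigmaSpan : Submodule K (Module.End K (W K)) :=
  Submodule.span K ((Set.range fun p : ℕ × ℕ => tau K p.1 p.2) ∪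
    (Set.range fun p : ℕ × ℕ => LieAlgebra.ad K (W K) (sigma K p.1 p.2)))

theorem tau_mem_tauSigmaSpan (u v : ℕ) : tau K u v ∈ tauSigmaSpan K :=
  Submodule.subset_span (Or.inl ⟨(u, v), rfl⟩)

theorem ad_sigma_mem_tauSigmaSpan (r s : ℕ) : ad K (W K) (sigma K r s) ∈ tauSigmaSpan K :=
  Submodule.subset_span (Or.inr ⟨(r, s), rfl⟩)

theorem ad_genB_mul_tau (u v : ℕ) : ad K (W K) (genB K) * tau K u v = tau K (u + 1) v := by
  rw [tau, tau, ← mul_assoc, ← pow_succ']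

theorem ad_genA_mul_tau_mem (u v : ℕ) : ad K (W K) (genA K) * tau K u v ∈ tauSigmaSpan K := by
  rcases u with _ | u
  · convert tau_mem_tauSigmaSpan K 0 (v + 1) using 1
    simp [tau, pow_succ']
  have hcomm : ad K (W K) (genA K) * tau K (u + 1) v =
      tau K (u + 1) (v + 1) + ad K (W K) (sigma K u 0) * ad K (W K) (genA K) ^ v := by
    rw [tau, ← mul_assoc, ad_mul_ad_pow_succ (derivedSeries_two_eq_bot K), add_mul, mul_assoc,
      ← pow_succ', tau]
    simp [sigma, tau]
  rw [hcomm]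
  refine add_mem (tau_mem_tauSigmaSpan K _ _) ?_
  rcases v with _ | v
  · simpa using ad_sigma_mem_tauSigmaSpan K u 0
  · rw [pow_succ', ← mul_assoc, ad_mul_ad_eq_zero_of_mem (derivedSeries_two_eq_bot K)
      (sigma_mem_derivedSeries_one K u 0), zero_mul]
    exact zero_mem _

theorem ad_sigma_mul_tau_mem (r s u v : ℕ) :
    ad K (W K) (sigma K r s) * tau K u v ∈ tauSigmaSpan K := by
  have hkill := ad_mul_ad_eq_zero_of_mem (derivedSeries_two_eq_bot K)
    (sigma_mem_derivedSeries_one K r s)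
  rcases u with _ | u
  · rcases v with _ | v
    · simpa [tau] using ad_sigma_mem_tauSigmaSpan K r s
    · rw [tau, pow_succ' _ v, pow_zero, one_mul, ← mul_assoc, hkill, zero_mul]
      exact zero_mem _
  · rw [tau, pow_succ', mul_assoc, ← mul_assoc, hkill, zero_mul]
    exact zero_mem _

theorem ad_basisFamily_mul_mem_tauSigmaSpan (i : Fin 2 ⊕ ℕ × ℕ) {e : Module.End K (W K)}
    (he : e ∈ (Set.range fun p : ℕ × ℕ => tau K p.1 p.2) ∪
      (Set.range fun p : ℕ × ℕ => LieAlgebra.ad K (W K) (sigma K p.1 p.2))) :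
    ad K (W K) (basisFamily K i) * e ∈ tauSigmaSpan K := by
  rcases he with ⟨⟨u, v⟩, rfl⟩ | ⟨⟨r, s⟩, rfl⟩
  · rcases i with i | ⟨r, s⟩
    · fin_cases i
      · exact ad_genA_mul_tau_mem K u v
      · simpa [basisFamily, ad_genB_mul_tau] using tau_mem_tauSigmaSpan K (u + 1) v
    · exact ad_sigma_mul_tau_mem K r s u v
  · rw [ad_mul_ad_of_mem (derivedSeries_two_eq_bot K) _ (sigma_mem_derivedSeries_one K r s)]
    rcases i with i | ⟨p, q⟩
    · fin_cases i
      · simpa [basisFamily, lie_genA_sigma] using ad_sigma_mem_tauSigmaSpan K r (s + 1)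
      · simpa [basisFamily, lie_genB_sigma] using ad_sigma_mem_tauSigmaSpan K (r + 1) s
    · rw [basisFamily, Sum.elim_inr, lie_eq_zero_of_mem_derivedSeries_one
        (derivedSeries_two_eq_bot K) (sigma_mem_derivedSeries_one K p q)
        (sigma_mem_derivedSeries_one K r s), map_zero]
      exact zero_mem _

theorem ad_mul_mem_tauSigmaSpan (x : W K) {e : Module.End K (W K)} (he : e ∈ tauSigmaSpan K) :
    ad K (W K) x * e ∈ tauSigmaSpan K := by
  have hx : x ∈ Submodule.span K (Set.range (basisFamily K)) := by
    rw [span_range_basisFamily]; trivial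
  induction hx, he using Submodule.span_induction₂ with
  | mem_mem x e hx he =>
    obtain ⟨i, rfl⟩ := hx
    exact ad_basisFamily_mul_mem_tauSigmaSpan K i he
  | zero_left => simp
  | zero_right => simp
  | add_left _ _ _ _ _ _ h₁ h₂ => simpa [add_mul] using add_mem h₁ h₂
  | add_right _ _ _ _ _ _ h₁ h₂ => simpa [mul_add] using add_mem h₁ h₂
  | smul_left _ _ _ _ _ h => simpa using Submodule.smul_mem _ _ h
  | smul_right _ _ _ _ _ h => simpa using Submodule.smul_mem _ _ h

theorem ad_pow_mem_tauSigmaSpan (x : W K) (n : ℕ) : ad K (W K) x ^ n ∈ tauSigmaSpan K := by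
  induction n with
  | zero => simpa [tau] using tau_mem_tauSigmaSpan K 0 0
  | succ n ih => simpa [pow_succ'] using ad_mul_mem_tauSigmaSpan K x ih

section MatrixModel

open MvPolynomial Matrix

noncomputable def matA : Matrix (Fin 2) (Fin 2) (MvPolynomial (Fin 2) K) := !![0, 0; 0, X 0]

noncomputable def matB : Matrix (Fin 2) (Fin 2) (MvPolynomial (Fin 2) K) := !![0, 0; 1, X 1]

theorem matA_row_zero (j : Fin 2) : matA K 0 j = 0 := by
  fin_cases j <;> rfl

theorem matB_row_zero (j : Fin 2) : matB K 0 j = 0 := by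
  fin_cases j <;> rfl

theorem lie_matA_single (p : MvPolynomial (Fin 2) K) :
    ⁅matA K, (single 1 0 p : Matrix (Fin 2) (Fin 2) _)⁆ = single 1 0 (X 0 * p) := by
  rw [lie_eq_single_of_row_zero (matA_row_zero K) fun j => by simp]
  simp [matA]

theorem lie_matB_single (p : MvPolynomial (Fin 2) K) :
    ⁅matB K, (single 1 0 p : Matrix (Fin 2) (Fin 2) _)⁆ = single 1 0 (X 1 * p) := by
  rw [lie_eq_single_of_row_zero (matB_row_zero K) fun j => by simp]
  simp [matB]

theorem lie_matA_matB : ⁅matA K, matB K⁆ = single 1 0 (X 0) := by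
  rw [lie_eq_single_of_row_zero (matA_row_zero K) (matB_row_zero K)]
  simp [matA, matB]

theorem eq_zero_of_lie_matA_of_lie_matB {M : Matrix (Fin 2) (Fin 2) (MvPolynomial (Fin 2) K)}
    (hM : ∀ j, M 0 j = 0) (hA : ⁅M, matA K⁆ = 0) (hB : ⁅M, matB K⁆ = 0) : M = 0 := by
  rw [lie_eq_single_of_row_zero hM (matA_row_zero K)] at hA
  rw [lie_eq_single_of_row_zero hM (matB_row_zero K)] at hB
  have h10 : M 1 0 = 0 := by
    simpa [matA, X_ne_zero] using congrFun₂ hA 1 0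
  have h11 : M 1 1 = 0 := by
    simpa [matB, h10] using congrFun₂ hB 1 0
  refine Matrix.ext fun i j => ?_
  fin_cases i
  · exact hM j
  · fin_cases j
    exacts [h10, h11]

noncomputable def toRowZero : W K →ₗ⁅K⁆ rowZeroLieSubalgebra K (MvPolynomial (Fin 2) K) :=
  (secondDerived K).liftQ
    (FreeLieAlgebra.lift K ![⟨matA K, mem_rowZeroLieSubalgebra.mpr (matA_row_zero K)⟩,
      ⟨matB K, mem_rowZeroLieSubalgebra.mpr (matB_row_zero K)⟩])
    (derivedSeries_le_ker _ derivedSeries_rowZeroLieSubalgebra_two_eq_bot)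

noncomputable def toMatrix : W K →ₗ⁅K⁆ Matrix (Fin 2) (Fin 2) (MvPolynomial (Fin 2) K) :=
  (rowZeroLieSubalgebra K _).incl.comp (toRowZero K)

theorem toMatrix_row_zero (x : W K) : ∀ j, toMatrix K x 0 j = 0 :=
  (toRowZero K x).2

theorem toMatrix_genA : toMatrix K (genA K) = matA K :=
  congrArg Subtype.val (FreeLieAlgebra.lift_of_apply (R := K) _ 0)

theorem toMatrix_genB : toMatrix K (genB K) = matB K :=
  congrArg Subtype.val (FreeLieAlgebra.lift_of_apply (R := K) _ 1)

theorem toMatrix_sigma (r s : ℕ) :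
    toMatrix K (sigma K r s) = single 1 0 (X 1 ^ r * X 0 ^ (s + 1)) := by
  induction r with
  | zero =>
    induction s with
    | zero =>
      rw [sigma_zero_zero, LieHom.map_lie, toMatrix_genA, toMatrix_genB, lie_matA_matB]
      simp
    | succ s ih =>
      rw [← lie_genA_sigma, LieHom.map_lie, toMatrix_genA, ih, lie_matA_single]
      ring_nf
  | succ r ih =>
    rw [← lie_genB_sigma, LieHom.map_lie, toMatrix_genB, ih, lie_matB_single]
    ring_nf

theorem linearIndependent_toMatrix_basisFamily :
    LinearIndependent K (toMatrix K ∘ basisFamily K) := by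
  have hfamily : toMatrix K ∘ basisFamily K =
      Sum.elim ![matA K, matB K] fun p => single 1 0 (X 1 ^ p.1 * X 0 ^ (p.2 + 1)) := by
    ext1 (i | p)
    · fin_cases i
      exacts [toMatrix_genA K, toMatrix_genB K]
    · exact toMatrix_sigma K p.1 p.2
  rw [hfamily]
  refine LinearIndependent.sum_elim_of_comp (entryLinearMap K _ 1 1) ?_ ?_ fun p => by simp
  · have hX : entryLinearMap K _ 1 1 ∘ ![matA K, matB K] = X := by
      ext1 i
      fin_cases i <;> simp [matA, matB]
    rw [hX]
    exact linearIndependent_X ..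
  · refine LinearIndependent.of_comp (entryLinearMap K _ 1 0) ?_
    have hinj : Function.Injective fun p : ℕ × ℕ => (p.1, p.2 + 1) := fun p q h => by
      simp only [Prod.mk.injEq, add_left_inj] at h
      exact Prod.ext h.1 h.2
    simpa [Function.comp_def] using
      (linearIndependent_X_pow_mul_X_pow (R := K) (by decide : (1 : Fin 2) ≠ 0)).comp _ hinj

theorem toMatrix_injective : Function.Injective (toMatrix K) :=
  (toMatrix K).toLinearMap.injective_of_linearIndependent_comp (span_range_basisFamily K)
    (linearIndependent_toMatrix_basisFamily K)

theorem ad_injective : Function.Injective (ad K (W K)) := by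
  rw [injective_iff_map_eq_zero]
  intro z hz
  have hA : ⁅toMatrix K z, matA K⁆ = 0 := by
    rw [← toMatrix_genA, ← LieHom.map_lie, ← ad_apply K, hz, LinearMap.zero_apply, map_zero]
  have hB : ⁅toMatrix K z, matB K⁆ = 0 := by
    rw [← toMatrix_genB, ← LieHom.map_lie, ← ad_apply K, hz, LinearMap.zero_apply, map_zero]
  apply toMatrix_injective K
  rw [map_zero]
  exact eq_zero_of_lie_matA_of_lie_matB K (toMatrix_row_zero K z) hA hB

end MatrixModel

end FreeMetabelian

/-- the adjoint representation `ad : w → End_K(w)` of the free metabelian Lie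
algebra on `A`, `B` is injective, and every power `ad_x^n` (hence every partial sum of
`exp(ad_x)`, and therefore `exp(ad(w))` in the completion) lies in the `K`-span of the
operators `τ_{u,v} = ad_B^u ad_A^v` and `ad_{σ_{r,s}}`. -/
theorem stmt15 :
    Function.Injective (fun x : W K => LieAlgebra.ad K (W K) x) ∧
    ∀ (x : W K) (n : ℕ),
      ((LieAlgebra.ad K (W K) x) ^ n : Module.End K (W K)) ∈
        Submodule.span K
          ((Set.range fun p : ℕ × ℕ => tau K p.1 p.2) ∪
            (Set.range fun p : ℕ × ℕ => LieAlgebra.ad K (W K) (sigma K p.1 p.2))) :=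
  ⟨FreeMetabelian.ad_injective K, FreeMetabelian.ad_pow_mem_tauSigmaSpan K⟩
end

section
/- Let H = 1 + ∑_{u+v>0} H*_{u,v} τ_{u,v} + ∑_{r,s≥0} H_{r,s} ad_{σ_{r,s}} be a grouplike element of the completed enveloping algebra of ad(w) for the free metabelian Lie algebra w on A, B, and write log(H) = h_B ad_B + h_A ad_A + ∑_{r,s} h_{r,s} ad_{σ_{r,s}}. Then h_A = H*_{0,1}, h_B = H*_{1,0}, and for all r, s ≥ 0: H_{r,s} = h_B^{r+1} h_A^{s+1} / ((r+s+2)·r!·(s+1)!) + ∑_{0≤u≤r, 0≤v≤s} h_{u,v}·h_B^{r−u}·h_A^{s−v} / ((r−u+s−v+1)·(r−u)!·(s−v)!). -/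
/-! Model of the completion `ŵ` of the free metabelian Lie algebra on `A`, `B`: a vector
`(c, d, F)` stands for `c·A + d·B + ∑_{r,s} F r s · σ_{r,s}` with `σ_{r,s} = ad_B^r ad_A^s [A,B]`.
Operators of the completed enveloping algebra of `ad(w)` spanned by `1`, `τ_{u,v} = ad_B^u ad_A^v`
and `ad_{σ_{r,s}}` act coefficientwise, the infinite sums being coefficientwise finite. -/

/-- The completion of the free metabelian Lie algebra on two generators. -/
abbrev What (K : Type*) := K × K × (ℕ → ℕ → K)

/-- The Lie element `L = h_B·ad_B + h_A·ad_A + ∑_{r,s} h_{r,s}·ad_{σ_{r,s}}` as an operator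
on the completion, written out coefficientwise (`ad_A(c,d,F) = d·σ_{0,0} + ∑ F r s σ_{r,s+1}`,
`ad_B(c,d,F) = −c·σ_{0,0} + ∑ F r s σ_{r+1,s}`, `ad_{σ_{r,s}}(c,d,F) = −c·σ_{r,s+1} − d·σ_{r+1,s}`). -/
def Lop {K : Type*} [Field K] (hB hA : K) (h : ℕ → ℕ → K) : What K → What K :=
  fun v => (0, 0, fun r s =>
    hA * ((if r = 0 ∧ s = 0 then v.2.1 else 0) + (if s = 0 then 0 else v.2.2 r (s - 1)))
    + hB * ((if r = 0 ∧ s = 0 then -v.1 else 0) + (if r = 0 then 0 else v.2.2 (r - 1) s))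
    + (if s = 0 then 0 else -v.1 * h r (s - 1))
    + (if r = 0 then 0 else -v.2.1 * h (r - 1) s))

/-- The operator `H = 1 + ∑_{u+v>0} H*_{u,v}·τ_{u,v} + ∑_{r,s} H_{r,s}·ad_{σ_{r,s}}` on the
completion, written out coefficientwise. -/
def OpH {K : Type*} [Field K] (Hst Hc : ℕ → ℕ → K) : What K → What K :=
  fun v => (v.1, v.2.1, fun r s =>
    v.2.2 r s
    + v.2.1 * Hst r (s + 1)
    + (if s = 0 then -v.1 * Hst (r + 1) 0 else 0)
    + (∑ p ∈ Finset.range (r + 1) ×ˢ Finset.range (s + 1),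
        if (p.1, p.2) ≠ (0, 0) then Hst p.1 p.2 * v.2.2 (r - p.1) (s - p.2) else 0)
    + (if s = 0 then 0 else -v.1 * Hc r (s - 1))
    + (if r = 0 then 0 else -v.2.1 * Hc (r - 1) s))

/-- `exp(L)` applied to a vector of the completion; since `L^n` raises the `σ`-degree, each
coefficient of the exponential series is a finite sum (`L^n v` has zero `σ_{r,s}`-coefficient
for `n > r + s + 1`). -/
noncomputable def expApply {K : Type*} [Field K] (hB hA : K) (h : ℕ → ℕ → K) (v : What K) :
    What K :=
  (v.1, v.2.1, fun r s =>
    ∑ n ∈ Finset.range (r + s + 2),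
      ((n.factorial : K))⁻¹ * (((Lop hB hA h)^[n] v).2.2 r s))


section Aux

open Finset

variable {K : Type*} [Field K]

private lemma diag_rec (hB hA : K) (m r s : ℕ) :
    (if r + s + 1 = m + 2 then ((r + s).choose r : K) * hB ^ (r + 1) * hA ^ s else 0)
      = hA * (if s = 0 then 0 else
          if r + (s - 1) + 1 = m + 1 then ((r + (s - 1)).choose r : K) * hB ^ (r + 1) * hA ^ (s - 1) else 0)
        + hB * (if r = 0 then 0 else
          if (r - 1) + s + 1 = m + 1 then (((r - 1) + s).choose (r - 1) : K) * hB ^ ((r - 1) + 1) * hA ^ s else 0) := by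
  split_ifs with c1 c2 c3 c4 c5 c6 c7 c8 c9 c10
  all_goals try (exfalso; omega)
  · subst c2
    obtain ⟨r', rfl⟩ : ∃ r', r = r' + 1 := ⟨r - 1, by omega⟩
    simp [Nat.choose_self]
    ring
  · subst c6
    obtain ⟨s', rfl⟩ : ∃ s', s = s' + 1 := ⟨s - 1, by omega⟩
    simp
    ring
  · obtain ⟨r', rfl⟩ : ∃ r', r = r' + 1 := ⟨r - 1, by omega⟩
    obtain ⟨s', rfl⟩ : ∃ s', s = s' + 1 := ⟨s - 1, by omega⟩
    simp only [Nat.add_sub_cancel, Nat.succ_sub_one]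
    have h1 : r' + 1 + (s' + 1) = (r' + 1 + s') + 1 := by omega
    rw [h1, Nat.choose_succ_succ']
    have h2 : r' + 1 + s' = r' + (s' + 1) := by omega
    rw [h2]
    push_cast
    ring
  all_goals simp

private lemma sum_rec (hB hA : K) (h : ℕ → ℕ → K) (m r s : ℕ) :
    (∑ i ∈ range (m + 2), if i ≤ r ∧ m + 2 - i ≤ s then
        ((m + 1).choose i : K) * hB ^ i * hA ^ (m + 1 - i) * h (r - i) (s - (m + 2 - i)) else 0)
      = hA * (if s = 0 then 0 else ∑ i ∈ range (m + 1), if i ≤ r ∧ m + 1 - i ≤ s - 1 then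
            (m.choose i : K) * hB ^ i * hA ^ (m - i) * h (r - i) ((s - 1) - (m + 1 - i)) else 0)
        + hB * (if r = 0 then 0 else ∑ i ∈ range (m + 1), if i ≤ r - 1 ∧ m + 1 - i ≤ s then
            (m.choose i : K) * hB ^ i * hA ^ (m - i) * h ((r - 1) - i) (s - (m + 1 - i)) else 0) := by
  have key : ∀ i ∈ range (m + 1),
      (if i + 1 ≤ r ∧ m + 2 - (i + 1) ≤ s then
          ((m + 1).choose (i + 1) : K) * hB ^ (i + 1) * hA ^ (m + 1 - (i + 1))
            * h (r - (i + 1)) (s - (m + 2 - (i + 1))) else 0)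
      = (if i + 1 ≤ r ∧ m + 1 - i ≤ s then
            (m.choose i : K) * hB ^ (i + 1) * hA ^ (m - i) * h (r - 1 - i) (s - (m + 1 - i)) else 0)
        + (if i + 1 ≤ r ∧ m + 1 - i ≤ s then
            (m.choose (i + 1) : K) * hB ^ (i + 1) * hA ^ (m - i) * h (r - 1 - i) (s - (m + 1 - i)) else 0) := by
    intro i hi
    have e1 : m + 2 - (i + 1) = m + 1 - i := by omega
    have e2 : m + 1 - (i + 1) = m - i := by omega
    have e3 : r - (i + 1) = r - 1 - i := by omega
    rw [e1, e2, e3, Nat.choose_succ_succ']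
    split_ifs with hc
    · push_cast; ring
    · simp
  rw [Finset.sum_range_succ', Finset.sum_congr rfl key, Finset.sum_add_distrib]
  have hB_side : (∑ i ∈ range (m + 1), if i + 1 ≤ r ∧ m + 1 - i ≤ s then
        (m.choose i : K) * hB ^ (i + 1) * hA ^ (m - i) * h (r - 1 - i) (s - (m + 1 - i)) else 0)
      = hB * (if r = 0 then 0 else ∑ i ∈ range (m + 1), if i ≤ r - 1 ∧ m + 1 - i ≤ s then
            (m.choose i : K) * hB ^ i * hA ^ (m - i) * h ((r - 1) - i) (s - (m + 1 - i)) else 0) := by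
    by_cases hr : r = 0
    · subst hr
      rw [if_pos rfl, mul_zero]
      apply Finset.sum_eq_zero
      intro i hi
      rw [if_neg (by omega)]
    · rw [if_neg hr, Finset.mul_sum]
      apply Finset.sum_congr rfl
      intro i hi
      split_ifs with h1 h2
      · ring
      · exfalso; omega
      · exfalso; omega
      · rw [mul_zero]
  have hA_side : (if 0 ≤ r ∧ m + 2 - 0 ≤ s then
        ((m + 1).choose 0 : K) * hB ^ 0 * hA ^ (m + 1 - 0) * h (r - 0) (s - (m + 2 - 0)) else 0)
      + (∑ i ∈ range (m + 1), if i + 1 ≤ r ∧ m + 1 - i ≤ s then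
          (m.choose (i + 1) : K) * hB ^ (i + 1) * hA ^ (m - i) * h (r - 1 - i) (s - (m + 1 - i)) else 0)
      = hA * (if s = 0 then 0 else ∑ i ∈ range (m + 1), if i ≤ r ∧ m + 1 - i ≤ s - 1 then
            (m.choose i : K) * hB ^ i * hA ^ (m - i) * h (r - i) ((s - 1) - (m + 1 - i)) else 0) := by
    have hAfull : (∑ i ∈ range (m + 2), if i ≤ r ∧ m + 2 - i ≤ s then
          (m.choose i : K) * hB ^ i * hA ^ (m + 1 - i) * h (r - i) (s - (m + 2 - i)) else 0)
        = (if 0 ≤ r ∧ m + 2 - 0 ≤ s then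
            ((m + 1).choose 0 : K) * hB ^ 0 * hA ^ (m + 1 - 0) * h (r - 0) (s - (m + 2 - 0)) else 0)
          + (∑ i ∈ range (m + 1), if i + 1 ≤ r ∧ m + 1 - i ≤ s then
              (m.choose (i + 1) : K) * hB ^ (i + 1) * hA ^ (m - i) * h (r - 1 - i) (s - (m + 1 - i)) else 0) := by
      rw [Finset.sum_range_succ', add_comm]
      congr 1
      · simp
      · apply Finset.sum_congr rfl
        intro i hi
        have e1 : m + 2 - (i + 1) = m + 1 - i := by omega
        have e2 : m + 1 - (i + 1) = m - i := by omega
        have e3 : r - (i + 1) = r - 1 - i := by omega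
        rw [e1, e2, e3]
    rw [← hAfull]
    by_cases hs : s = 0
    · subst hs
      rw [if_pos rfl, mul_zero]
      apply Finset.sum_eq_zero
      intro i hi
      simp only [mem_range] at hi
      rw [if_neg (by omega)]
    · rw [if_neg hs, Finset.mul_sum, Finset.sum_range_succ]
      simp only [Nat.choose_succ_self, Nat.cast_zero, zero_mul, ite_self, add_zero]
      apply Finset.sum_congr rfl
      intro i hi
      simp only [mem_range] at hi
      split_ifs with h1 h2
      · have e1 : m + 1 - i = (m - i) + 1 := by omega
        have e2 : s - (m + 2 - i) = (s - 1) - (m + 1 - i) := by omega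
        rw [e2, e1, pow_succ]
        ring
      · exfalso; omega
      · exfalso; omega
      · rw [mul_zero]
  linear_combination hA_side + hB_side

/-- Closed form for the `σ_{r,s}`-coefficients of `L^n (A)`. -/
def Fc (hB hA : K) (h : ℕ → ℕ → K) (n r s : ℕ) : K :=
  -(if r + s + 1 = n then ((r + s).choose r : K) * hB ^ (r + 1) * hA ^ s else 0)
  - ∑ i ∈ Finset.range n, if i ≤ r ∧ n - i ≤ s then
      ((n - 1).choose i : K) * hB ^ i * hA ^ (n - 1 - i) * h (r - i) (s - (n - i)) else 0

private lemma Fc_rec (hB hA : K) (h : ℕ → ℕ → K) (m r s : ℕ) :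
    Fc hB hA h (m + 2) r s
      = hA * (if s = 0 then 0 else Fc hB hA h (m + 1) r (s - 1))
        + hB * (if r = 0 then 0 else Fc hB hA h (m + 1) (r - 1) s) := by
  have hdiag := diag_rec hB hA m r s
  have hsum := sum_rec hB hA h m r s
  have e1 : m + 2 - 1 = m + 1 := rfl
  have e2 : m + 1 - 1 = m := rfl
  simp only [Fc, e1, e2]
  by_cases hs : s = 0 <;> by_cases hr : r = 0 <;>
    simp only [hs, hr, if_true, if_false, reduceIte, not_false_iff, if_neg, if_pos] at hdiag hsum ⊢ <;>
    linear_combination - hdiag - hsum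

private lemma iterLop (hB hA : K) (h : ℕ → ℕ → K) : ∀ n : ℕ,
    (Lop hB hA h)^[n + 1] ((1 : K), (0 : K), fun _ _ => (0 : K))
      = ((0 : K), (0 : K), fun r s => Fc hB hA h (n + 1) r s)
  | 0 => by
      rw [show (0 : ℕ) + 1 = 1 from rfl, Function.iterate_one]
      refine Prod.ext rfl (Prod.ext rfl ?_)
      funext r s
      simp only [Lop, Fc]
      rw [Finset.sum_range_one]
      split_ifs
      all_goals (first | (exfalso; omega) | simp_all)
  | (n + 1) => by
      rw [Function.iterate_succ_apply', iterLop hB hA h n]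
      refine Prod.ext rfl (Prod.ext rfl ?_)
      funext r s
      show _ = Fc hB hA h (n + 2) r s
      rw [Fc_rec hB hA h n]
      simp only [Lop, neg_zero, mul_zero, zero_mul, neg_mul, add_zero, zero_add, ite_self,
        one_mul]

variable [CharZero K]

private lemma fact_key (i j : ℕ) :
    (i + j).choose i * ((i + j + 1) * i.factorial * j.factorial) = (i + j + 1).factorial := by
  have h1 := Nat.choose_mul_factorial_mul_factorial (Nat.le_add_right i j)
  have e : i + j - i = j := by omega
  rw [e] at h1
  have e2 : (i + j + 1).factorial = (i + j + 1) * (i + j).factorial := Nat.factorial_succ _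
  rw [e2, ← h1]
  ring

private lemma inv_fact_choose (i j : ℕ) : (((i + j + 1).factorial : K))⁻¹ * ((i + j).choose i : K)
    = ((((i + j + 1) * i.factorial * j.factorial : ℕ)) : K)⁻¹ := by
  have n1 : ((i + j + 1).factorial : K) ≠ 0 := Nat.cast_ne_zero.2 (Nat.factorial_ne_zero _)
  have n2 : ((((i + j + 1) * i.factorial * j.factorial : ℕ)) : K) ≠ 0 :=
    Nat.cast_ne_zero.2 (by positivity)
  rw [inv_mul_eq_div, inv_eq_one_div, div_eq_div_iff n1 n2, one_mul]
  exact_mod_cast fact_key i j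

private lemma final_sum (hB hA : K) (h : ℕ → ℕ → K) (r s : ℕ) :
    -∑ n ∈ range (r + s + 2), (((n + 1).factorial : K))⁻¹ * Fc hB hA h (n + 1) r (s + 1)
      = hB ^ (r + 1) * hA ^ (s + 1)
            / (((r + s + 2) * r.factorial * (s + 1).factorial : ℕ) : K)
          + ∑ p ∈ Finset.range (r + 1) ×ˢ Finset.range (s + 1),
              h p.1 p.2 * hB ^ (r - p.1) * hA ^ (s - p.2)
                / ((((r - p.1) + (s - p.2) + 1) * (r - p.1).factorial
                    * (s - p.2).factorial : ℕ) : K) := by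
  have expand : ∀ n ∈ range (r + s + 2),
      (((n + 1).factorial : K))⁻¹ * Fc hB hA h (n + 1) r (s + 1)
      = -((((n + 1).factorial : K))⁻¹
            * (if r + (s + 1) + 1 = n + 1 then ((r + (s + 1)).choose r : K) * hB ^ (r + 1) * hA ^ (s + 1) else 0))
        - (((n + 1).factorial : K))⁻¹
            * ∑ i ∈ range (n + 1), (if i ≤ r ∧ n + 1 - i ≤ s + 1 then
                (n.choose i : K) * hB ^ i * hA ^ (n - i) * h (r - i) (s + 1 - (n + 1 - i)) else 0) := by
    intro n _
    have e1 : n + 1 - 1 = n := rfl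
    simp only [Fc, e1]
    ring
  rw [Finset.sum_congr rfl expand]
  simp only [sub_eq_add_neg, Finset.sum_add_distrib, neg_add_rev, neg_neg, Finset.sum_neg_distrib]
  have diag : (∑ x ∈ range (r + s + 2), (((x + 1).factorial : K))⁻¹ *
        if r + (s + 1) + 1 = x + 1 then ((r + (s + 1)).choose r : K) * hB ^ (r + 1) * hA ^ (s + 1) else 0)
      = hB ^ (r + 1) * hA ^ (s + 1) / (((r + s + 2) * r.factorial * (s + 1).factorial : ℕ) : K) := by
    rw [Finset.sum_eq_single (r + s + 1)]
    · rw [if_pos (by omega)]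
      have e : r + (s + 1) = r + s + 1 := by omega
      rw [e]
      have e2 : r + s + 1 + 1 = r + (s + 1) + 1 := by omega
      have e3 : r + s + 1 = r + (s + 1) := by omega
      rw [e2, e3, ← mul_assoc, ← mul_assoc, inv_fact_choose r (s + 1)]
      rw [div_eq_mul_inv]
      have e4 : r + (s + 1) + 1 = r + s + 2 := by omega
      rw [e4]
      ring
    · intro b _ hb
      rw [if_neg (by omega), mul_zero]
    · intro hmem
      exact absurd (Finset.mem_range.2 (by omega)) hmem
  have sums : (∑ x ∈ range (r + s + 2), (((x + 1).factorial : K))⁻¹ *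
        ∑ i ∈ range (x + 1), if i ≤ r ∧ x + 1 - i ≤ s + 1 then
          (x.choose i : K) * hB ^ i * hA ^ (x - i) * h (r - i) (s + 1 - (x + 1 - i)) else 0)
      = ∑ p ∈ Finset.range (r + 1) ×ˢ Finset.range (s + 1),
          h p.1 p.2 * hB ^ (r - p.1) * hA ^ (s - p.2)
            / ((((r - p.1) + (s - p.2) + 1) * (r - p.1).factorial * (s - p.2).factorial : ℕ) : K) := by
    have step_a : ∀ x ∈ range (r + s + 2), (((x + 1).factorial : K))⁻¹ *
        (∑ i ∈ range (x + 1), if i ≤ r ∧ x + 1 - i ≤ s + 1 then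
          (x.choose i : K) * hB ^ i * hA ^ (x - i) * h (r - i) (s + 1 - (x + 1 - i)) else 0)
        = ∑ i ∈ range (r + 1), (((x + 1).factorial : K))⁻¹ *
            (if i ≤ r ∧ x + 1 - i ≤ s + 1 then
              (x.choose i : K) * hB ^ i * hA ^ (x - i) * h (r - i) (s + 1 - (x + 1 - i)) else 0) := by
      intro x _
      rw [← Finset.mul_sum]
      congr 1
      have h1 := Finset.sum_subset (s₁ := range (x + 1)) (s₂ := range (x + r + 2))
        (f := fun i => if i ≤ r ∧ x + 1 - i ≤ s + 1 then
          (x.choose i : K) * hB ^ i * hA ^ (x - i) * h (r - i) (s + 1 - (x + 1 - i)) else 0)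
        (by intro a ha; simp only [mem_range] at *; omega)
        (by
          intro i _ hni
          simp only [mem_range, not_lt] at hni
          split_ifs with hc
          · rw [Nat.choose_eq_zero_of_lt (by omega)]
            simp
          · rfl)
      have h2 := Finset.sum_subset (s₁ := range (r + 1)) (s₂ := range (x + r + 2))
        (f := fun i => if i ≤ r ∧ x + 1 - i ≤ s + 1 then
          (x.choose i : K) * hB ^ i * hA ^ (x - i) * h (r - i) (s + 1 - (x + 1 - i)) else 0)
        (by intro a ha; simp only [mem_range] at *; omega)
        (by
          intro i _ hni
          simp only [mem_range, not_lt] at hni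
          rw [if_neg (by omega)])
      rw [h1, ← h2]
    rw [Finset.sum_congr rfl step_a, Finset.sum_comm]
    have inner_eq : ∀ i ∈ range (r + 1),
        (∑ x ∈ range (r + s + 2), (((x + 1).factorial : K))⁻¹ *
          (if i ≤ r ∧ x + 1 - i ≤ s + 1 then
            (x.choose i : K) * hB ^ i * hA ^ (x - i) * h (r - i) (s + 1 - (x + 1 - i)) else 0))
        = ∑ j ∈ range (s + 1), (((i + j + 1).factorial : K))⁻¹ * ((i + j).choose i : K)
            * hB ^ i * hA ^ j * h (r - i) (s - j) := by
      intro i hi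
      simp only [mem_range] at hi
      have h1 := Finset.sum_subset (s₁ := Finset.Ico i (i + (s + 1))) (s₂ := range (r + s + 2))
        (f := fun x => (((x + 1).factorial : K))⁻¹ *
          (if i ≤ r ∧ x + 1 - i ≤ s + 1 then
            (x.choose i : K) * hB ^ i * hA ^ (x - i) * h (r - i) (s + 1 - (x + 1 - i)) else 0))
        (by intro a ha; simp only [Finset.mem_Ico, mem_range] at *; omega)
        (by
          intro x _ hnx
          simp only [Finset.mem_Ico, not_and, not_lt, not_le] at hnx
          by_cases hxi : x < i
          · split_ifs with hc
            · rw [Nat.choose_eq_zero_of_lt (by omega)]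
              simp
            · rw [mul_zero]
          · rw [if_neg (by omega), mul_zero])
      rw [← h1, Finset.sum_Ico_eq_sum_range]
      have e : i + (s + 1) - i = s + 1 := by omega
      rw [e]
      apply Finset.sum_congr rfl
      intro j hj
      simp only [mem_range] at hj
      rw [if_pos ⟨by omega, by omega⟩]
      have e1 : i + j - i = j := by omega
      have e2 : s + 1 - (i + j + 1 - i) = s - j := by omega
      rw [e1, e2]
      ring
    rw [Finset.sum_congr rfl inner_eq, Finset.sum_product, ← Finset.sum_range_reflect]
    apply Finset.sum_congr rfl
    intro i hi
    simp only [mem_range] at hi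
    rw [← Finset.sum_range_reflect]
    apply Finset.sum_congr rfl
    intro j hj
    simp only [mem_range] at hj
    have er : r + 1 - 1 - i = r - i := by omega
    have es : s + 1 - 1 - j = s - j := by omega
    rw [er, es]
    have e3 : r - (r - i) = i := by omega
    have e4 : s - (s - j) = j := by omega
    rw [e3, e4]
    rw [div_eq_mul_inv, ← inv_fact_choose (r - i) (s - j)]
    ring
  rw [diag, sums]
  ring

end Aux

/-- if `H = 1 + ∑_{u+v>0} H*_{u,v}τ_{u,v} + ∑ H_{r,s}ad_{σ_{r,s}}` is grouplike,
i.e. `H = exp(log H)` with `log H = h_B·ad_B + h_A·ad_A + ∑ h_{r,s}·ad_{σ_{r,s}}` a Lie element,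
then `h_A = H*_{0,1}`, `h_B = H*_{1,0}`, and
`H_{r,s} = h_B^{r+1}h_A^{s+1}/((r+s+2)·r!·(s+1)!) +
  ∑_{u≤r,v≤s} h_{u,v}·h_B^{r−u}·h_A^{s−v}/((r−u+s−v+1)·(r−u)!·(s−v)!)`. -/
theorem stmt16 (K : Type*) [Field K] [CharZero K]
    (Hst Hc : ℕ → ℕ → K) (hHst : Hst 0 0 = 0)
    (hB hA : K) (h : ℕ → ℕ → K)
    (hgrp : ∀ v : What K, OpH Hst Hc v = expApply hB hA h v) :
    hA = Hst 0 1 ∧ hB = Hst 1 0 ∧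
    ∀ r s : ℕ,
      Hc r s
        = hB ^ (r + 1) * hA ^ (s + 1)
            / (((r + s + 2) * r.factorial * (s + 1).factorial : ℕ) : K)
          + ∑ p ∈ Finset.range (r + 1) ×ˢ Finset.range (s + 1),
              h p.1 p.2 * hB ^ (r - p.1) * hA ^ (s - p.2)
                / ((((r - p.1) + (s - p.2) + 1) * (r - p.1).factorial
                    * (s - p.2).factorial : ℕ) : K) := by
  refine ⟨?_, ?_, ?_⟩
  · have h1 := congr_fun (congr_fun (congr_arg (fun w : What K => w.2.2)
      (hgrp ((0 : K), (1 : K), fun _ _ => 0))) 0) 0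
    simp [OpH, expApply, Lop, Finset.sum_range_succ] at h1
    exact h1.symm
  · have h1 := congr_fun (congr_fun (congr_arg (fun w : What K => w.2.2)
      (hgrp ((1 : K), (0 : K), fun _ _ => 0))) 0) 0
    simp [OpH, expApply, Lop, Finset.sum_range_succ] at h1
    exact h1.symm
  · intro r s
    have h1 := congr_fun (congr_fun (congr_arg (fun w : What K => w.2.2)
      (hgrp ((1 : K), (0 : K), fun _ _ => 0))) r) (s + 1)
    simp only [OpH, expApply] at h1
    simp at h1
    have e0 : r + (s + 1) + 2 = r + s + 3 := by omega
    rw [e0, Finset.sum_range_succ'] at h1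
    simp only [Function.iterate_zero, id_eq, Nat.factorial_zero, Nat.cast_one, inv_one] at h1
    have hrw : ∀ n ∈ Finset.range (r + s + 2),
        (((n + 1).factorial : K))⁻¹ * ((Lop hB hA h)^[n + 1] ((1 : K), (0 : K), fun _ _ => (0 : K))).2.2 r (s + 1)
          = (((n + 1).factorial : K))⁻¹ * Fc hB hA h (n + 1) r (s + 1) := by
      intro n _
      rw [iterLop hB hA h n]
    rw [Finset.sum_congr rfl hrw] at h1
    rw [← final_sum hB hA h r s]
    linear_combination - h1
end
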